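/- There exist constants 0 < c₀ ≤ c₁ such that for all x ∈ ℝ, y > 0, and f > 0, with R = (f/y)·[[1,-x],[-x,x²+y²]] and γ = (x+iy-i)/(x+iy+i), one has c₀·‖R‖ ≤ f/(1-|γ|²) ≤ c₁·‖R‖, where ‖R‖ is the operator norm of R. -/

import Mathlib

open Matrix Complex
open scoped Matrix.Norms.L2Operator

/-!
Write `z = x + iy` and `T = 1 + x² + y²`. The matrix `[[1,-x],[-x,x²+y²]]` is `BᵀB` for
`B = [[1,-x],[0,y]]`, so it is positive semidefinite with trace `T`, and its operator norm (its
largest eigenvalue) lies between `T/2` and `T`. On the other side `1 - |γ|² = 4y/|z+i|²` with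
`|z+i|² = T + 2y ∈ [T, 2T]`, since `2y ≤ 1 + y²`. Both quantities are therefore comparable to
`fT/y`, and `c₀ = 1/4`, `c₁ = 1` work.
-/

namespace Matrix

open scoped ComplexOrder

variable {n 𝕜 : Type*} [Fintype n] [DecidableEq n] [RCLike 𝕜] {A : Matrix n n 𝕜}

theorem IsHermitian.l2_opNorm_eq_norm_eigenvalues (hA : A.IsHermitian) :
    ‖A‖ = ‖hA.eigenvalues‖ := by
  conv_lhs => rw [hA.spectral_theorem]
  rw [Unitary.conjStarAlgAut_apply, ← Unitary.coe_star, CStarRing.norm_mul_coe_unitary,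
    CStarRing.norm_coe_unitary_mul, l2_opNorm_diagonal]
  exact ((algebraMap_isometry ℝ 𝕜).postcomp_pi).norm_map_of_map_zero (by simp) _

theorem IsHermitian.norm_trace_le_card_mul_l2_opNorm (hA : A.IsHermitian) :
    ‖A.trace‖ ≤ Fintype.card n * ‖A‖ := by
  rw [hA.trace_eq_sum_eigenvalues, hA.l2_opNorm_eq_norm_eigenvalues]
  calc ‖∑ i, (hA.eigenvalues i : 𝕜)‖ ≤ ∑ i, ‖hA.eigenvalues i‖ :=
        (norm_sum_le _ _).trans_eq (by simp)
    _ ≤ ∑ _i : n, ‖hA.eigenvalues‖ := Finset.sum_le_sum fun i _ => norm_le_pi_norm _ i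
    _ = Fintype.card n * ‖hA.eigenvalues‖ := by simp

theorem PosSemidef.l2_opNorm_le_re_trace (hA : A.PosSemidef) :
    ‖A‖ ≤ RCLike.re A.trace := by
  have hev := hA.eigenvalues_nonneg
  rw [hA.isHermitian.l2_opNorm_eq_norm_eigenvalues, hA.isHermitian.trace_eq_sum_eigenvalues,
    map_sum]
  simp only [RCLike.ofReal_re]
  refine (pi_norm_le_iff_of_nonneg (Finset.sum_nonneg fun i _ => hev i)).2 fun i => ?_
  rw [Real.norm_of_nonneg (hev i)]
  exact Finset.single_le_sum (fun j _ => hev j) (Finset.mem_univ i)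

end Matrix

theorem one_sub_norm_cayley_sq {z : ℂ} (hz : z + I ≠ 0) :
    1 - ‖(z - I) / (z + I)‖ ^ 2 = 4 * z.im / normSq (z + I) := by
  have h : normSq (z + I) ≠ 0 := normSq_eq_zero.not.2 hz
  rw [norm_div, div_pow, Complex.sq_norm, Complex.sq_norm]
  field_simp
  simp only [normSq_apply, add_re, sub_re, add_im, sub_im, I_re, I_im]
  ring

theorem carousel_weight_eq (x y f : ℝ) (hy : 0 < y) :
    f / (1 - ‖(x + y * I - I) / (x + y * I + I)‖ ^ 2) = f * (x ^ 2 + (y + 1) ^ 2) / (4 * y) := by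
  have hz : (x + y * I : ℂ) + I ≠ 0 := by
    apply_fun Complex.im
    simpa using (by linarith : y + 1 ≠ 0)
  rw [one_sub_norm_cayley_sq hz, div_div_eq_mul_div,
    show (x + y * I + I : ℂ) = x + ((y + 1 : ℝ) : ℂ) * I by push_cast; ring, normSq_add_mul_I]
  simp

theorem carousel_matrix_eq_conjTranspose_mul_self (x y : ℝ) :
    (!![1, -x; -x, x ^ 2 + y ^ 2] : Matrix (Fin 2) (Fin 2) ℝ) =
      (!![1, -x; 0, y] : Matrix (Fin 2) (Fin 2) ℝ)ᴴ * !![1, -x; 0, y] := by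
  ext i j
  fin_cases i <;> fin_cases j <;> simp [Matrix.mul_apply, sq]

theorem l2_opNorm_carousel_matrix_mem_Icc (x y : ℝ) :
    ‖(!![1, -x; -x, x ^ 2 + y ^ 2] : Matrix (Fin 2) (Fin 2) ℝ)‖ ∈
      Set.Icc ((1 + x ^ 2 + y ^ 2) / 2) (1 + x ^ 2 + y ^ 2) := by
  have hM := carousel_matrix_eq_conjTranspose_mul_self x y ▸
    posSemidef_conjTranspose_mul_self !![1, -x; 0, y]
  have htrace : (!![1, -x; -x, x ^ 2 + y ^ 2] : Matrix (Fin 2) (Fin 2) ℝ).trace =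
      1 + x ^ 2 + y ^ 2 := by
    simp [Matrix.trace, add_assoc]
  have hlo := hM.isHermitian.norm_trace_le_card_mul_l2_opNorm
  have hup := hM.l2_opNorm_le_re_trace
  rw [htrace, Real.norm_of_nonneg (by positivity), Fintype.card_fin] at hlo
  rw [htrace] at hup
  exact ⟨by push_cast at hlo; linarith, hup⟩

/-- There are constants `0 < c₀ ≤ c₁` such that for all `x ∈ ℝ`, `y > 0`, `f > 0`,
with `R = (f/y)·[[1,-x],[-x,x²+y²]]` and `γ` the Cayley image of `x+iy`,
`c₀‖R‖ ≤ f/(1-|γ|²) ≤ c₁‖R‖`, where `‖R‖` is the operator norm. -/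
theorem opNorm_comparable_carousel_weight :
    ∃ c₀ c₁ : ℝ, 0 < c₀ ∧ c₀ ≤ c₁ ∧
      ∀ x y f : ℝ, 0 < y → 0 < f →
        c₀ * ‖((f / y) • !![1, -x; -x, x ^ 2 + y ^ 2] : Matrix (Fin 2) (Fin 2) ℝ)‖ ≤
            f / (1 - ‖(x + y * I - I) / (x + y * I + I)‖ ^ 2) ∧
          f / (1 - ‖(x + y * I - I) / (x + y * I + I)‖ ^ 2) ≤
            c₁ * ‖((f / y) • !![1, -x; -x, x ^ 2 + y ^ 2] : Matrix (Fin 2) (Fin 2) ℝ)‖ := by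
  refine ⟨1 / 4, 1, by norm_num, by norm_num, fun x y f hy hf => ?_⟩
  obtain ⟨hlo, hup⟩ := l2_opNorm_carousel_matrix_mem_Icc x y
  set m := ‖(!![1, -x; -x, x ^ 2 + y ^ 2] : Matrix (Fin 2) (Fin 2) ℝ)‖
  have htwo_y : 2 * y ≤ 1 + x ^ 2 + y ^ 2 := by linarith [sq_nonneg (y - 1), sq_nonneg x]
  rw [norm_smul, Real.norm_of_nonneg (by positivity), carousel_weight_eq x y f hy]
  constructor
  · rw [show 1 / 4 * (f / y * m) = f * m / (4 * y) by field_simp]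
    gcongr
    linarith
  · rw [show 1 * (f / y * m) = f * (4 * m) / (4 * y) by field_simp]
    gcongr
    linarith
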